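/- Let μ be a finite positive Borel measure on the unit circle T with infinite support, K_n its Christoffel kernel, w ∈ T, ζ_{0n}, …, ζ_{nn} ∈ T the zeros of B_{n+1}(w,·), and ℓ_{jn}(z) := K_n(z, ζ_{jn}) / K_n(ζ_{jn}, ζ_{jn}) the fundamental polynomials. For any function f : T → ℂ, the Lagrange interpolant L_n(f) := Σ_{j=0}^n f(ζ_{jn}) ℓ_{jn} satisfies ∫_T |L_n(f)|² dμ = Σ_{j=0}^n |f(ζ_{jn})|² / K_n(ζ_{jn}, ζ_{jn}); in particular ∫_T |L_n(f)|² dμ ≤ μ(T) · max_{0≤j≤n} |f(ζ_{jn})|². -/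

import Mathlib

open MeasureTheory Polynomial Filter
open scoped ComplexConjugate Topology

/-- The Christoffel kernel `K_n(w,z) = ∑_{j=0}^n conj(φ_j(w)) φ_j(z)`. -/
noncomputable def christoffelK (φ : ℕ → Polynomial ℂ) (n : ℕ) (w z : ℂ) : ℂ :=
  ∑ j ∈ Finset.range (n + 1), conj ((φ j).eval w) * (φ j).eval z

/-- The para-orthogonal polynomial `B_{n+1}(w,z) = (1 − conj(w) z) K_n(w,z)`. -/
noncomputable def paraOrtho (φ : ℕ → Polynomial ℂ) (n : ℕ) (w z : ℂ) : ℂ :=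
  (1 - conj w * z) * christoffelK φ n w z

/-- The `j`-th fundamental (Lagrange) polynomial for the nodes `ζ`:
`ℓ_{jn}(z) = K_n(z, ζ_{jn}) / K_n(ζ_{jn}, ζ_{jn})`.  Note that by Hermitian symmetry of the
kernel, `K_n(z, ζ) = conj (K_n(ζ, z))`; as a *polynomial* in `z` (of degree `n`, as in the
paper) the fundamental polynomial is `z ↦ K_n(ζ_{jn}, z) / K_n(ζ_{jn}, ζ_{jn})`, with
`K_n(ζ_{jn}, ζ_{jn}) = ∑_k |φ_k(ζ_{jn})|²` a positive real number. -/
noncomputable def ellFun (φ : ℕ → Polynomial ℂ) (n : ℕ) (ζ : Fin (n + 1) → ℂ)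
    (j : Fin (n + 1)) (z : ℂ) : ℂ :=
  christoffelK φ n (ζ j) z / christoffelK φ n (ζ j) (ζ j)

/-- The `n`-th Lagrange interpolation polynomial of `f` at the nodes `ζ`:
`L_n(f)(z) = ∑_{j=0}^n f(ζ_{jn}) ℓ_{jn}(z)`. -/
noncomputable def lagrangeInterp (φ : ℕ → Polynomial ℂ) (n : ℕ) (ζ : Fin (n + 1) → ℂ)
    (f : ℂ → ℂ) (z : ℂ) : ℂ :=
  ∑ j : Fin (n + 1), f (ζ j) * ellFun φ n ζ j z

/-!
Polynomials embed linearly into `L²(μ)`, and multiplication by `z` is an isometry there because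
`μ` lives on the unit circle. The heart of the matter is that the kernel vanishes between distinct
nodes, `K_n(ζ_j, ζ_k) = 0`. Let `v ∈ T` be a zero of `B = B_{n+1}(w, ·)`. The reproducing property
of `K_n(w, ·)` makes `B` orthogonal to `z·𝒫_{n-1}`; since `|z| = |v| = 1` on the support, the
quotient `q = B / (z - v) ∈ 𝒫_n` is then orthogonal to `(z - v)·𝒫_{n-1}`, the polynomials of
degree `≤ n` vanishing at `v`. In `𝒫_n` that orthogonal complement is spanned by `K_n(v, ·)`, so
`K_n(v, ·)` is a multiple of `q` and vanishes at all other zeros of `B`.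

Hence the `K_n(ζ_j, ·)` are pairwise orthogonal with `‖K_n(ζ_j, ·)‖² = K_n(ζ_j, ζ_j)`, which gives
the identity. For `f = 1` the interpolant is the constant `1`, so `∑_j 1 / K_n(ζ_j, ζ_j) = μ(T)`,
and the bound follows.
-/

open scoped InnerProductSpace

section L2

variable {μ : Measure ℂ}

lemma ae_norm_eq_one (hμT : μ (Metric.sphere (0 : ℂ) 1)ᶜ = 0) : ∀ᵐ z ∂μ, ‖z‖ = 1 := by
  filter_upwards [measure_eq_zero_iff_ae_notMem.mp hμT] with z hz
  simpa using hz

variable [IsFiniteMeasure μ]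

lemma memLp_eval (hμT : μ (Metric.sphere (0 : ℂ) 1)ᶜ = 0) (p : ℂ[X]) (q : ENNReal) :
    MemLp p.eval q μ := by
  obtain ⟨C, hC⟩ := (isCompact_sphere (0 : ℂ) 1).exists_bound_of_continuousOn
    p.continuous.continuousOn
  refine .of_bound p.continuous.aestronglyMeasurable C ?_
  filter_upwards [ae_norm_eq_one hμT] with z hz
  exact hC z (by simpa using hz)

noncomputable def polyToL2 (hμT : μ (Metric.sphere (0 : ℂ) 1)ᶜ = 0) : ℂ[X] →ₗ[ℂ] Lp ℂ 2 μ where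
  toFun p := (memLp_eval hμT p 2).toLp p.eval
  map_add' p q := by simp_rw [eval_add]; exact MemLp.toLp_add _ _
  map_smul' c p := by simp_rw [eval_smul]; exact MemLp.toLp_const_smul c (memLp_eval hμT p 2)

variable (hμT : μ (Metric.sphere (0 : ℂ) 1)ᶜ = 0)

lemma polyToL2_ae_eq (p : ℂ[X]) : polyToL2 hμT p =ᵐ[μ] p.eval :=
  MemLp.coeFn_toLp (memLp_eval hμT p 2)

lemma inner_polyToL2 (p q : ℂ[X]) :
    ⟪polyToL2 hμT p, polyToL2 hμT q⟫_ℂ = ∫ z, conj (p.eval z) * q.eval z ∂μ := by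
  rw [L2.inner_def]
  refine integral_congr_ae ?_
  filter_upwards [polyToL2_ae_eq hμT p, polyToL2_ae_eq hμT q] with z hp hq
  rw [hp, hq, RCLike.inner_apply, mul_comm]

lemma norm_polyToL2_sq (p : ℂ[X]) :
    ‖polyToL2 hμT p‖ ^ 2 = ∫ z, ‖p.eval z‖ ^ 2 ∂μ := by
  have h := inner_self_eq_norm_sq_to_K (𝕜 := ℂ) (polyToL2 hμT p)
  simp_rw [inner_polyToL2, Complex.conj_mul', ← Complex.ofReal_pow, integral_complex_ofReal] at h
  exact Complex.ofReal_injective (by push_cast; exact h.symm)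

lemma inner_polyToL2_X_mul (p q : ℂ[X]) :
    ⟪polyToL2 hμT (X * p), polyToL2 hμT (X * q)⟫_ℂ = ⟪polyToL2 hμT p, polyToL2 hμT q⟫_ℂ := by
  simp_rw [inner_polyToL2]
  refine integral_congr_ae ?_
  filter_upwards [ae_norm_eq_one hμT] with z hz
  have hzz : conj z * z = 1 := by simp [Complex.conj_mul', hz]
  simp only [eval_mul, eval_X, map_mul]
  linear_combination (conj (p.eval z) * q.eval z) * hzz

lemma polyToL2_injective (hμinf : ∀ s : Finset ℂ, μ ((s : Set ℂ)ᶜ) ≠ 0) :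
    Function.Injective (polyToL2 hμT) := by
  rw [← LinearMap.ker_eq_bot, LinearMap.ker_eq_bot']
  intro p hp
  by_contra hp0
  refine hμinf p.roots.toFinset (measure_eq_zero_iff_ae_notMem.mpr ?_)
  filter_upwards [polyToL2_ae_eq hμT p, hp ▸ Lp.coeFn_zero ℂ 2 μ] with z h1 h2
  simp_all

end L2

section Kernel

variable {μ : Measure ℂ} [IsFiniteMeasure μ] (hμT : μ (Metric.sphere (0 : ℂ) 1)ᶜ = 0)
  {φ : ℕ → ℂ[X]} {n : ℕ}

lemma orthonormal_polyToL2
    (horth : ∀ k m, ∫ z, (φ k).eval z * conj ((φ m).eval z) ∂μ = if k = m then 1 else 0) :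
    Orthonormal ℂ (fun k => polyToL2 hμT (φ k)) := by
  rw [orthonormal_iff_ite]
  intro i j
  simp_rw [inner_polyToL2, mul_comm (conj _), horth, eq_comm]

variable (φ n) in
noncomputable def christoffelKPoly (v : ℂ) : ℂ[X] :=
  ∑ j ∈ Finset.range (n + 1), conj ((φ j).eval v) • φ j

lemma eval_christoffelKPoly (v z : ℂ) :
    (christoffelKPoly φ n v).eval z = christoffelK φ n v z := by
  simp [christoffelKPoly, christoffelK, eval_finsetSum]

lemma degree_christoffelKPoly_le (hdeg : ∀ k, (φ k).degree ≤ k) (v : ℂ) :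
    (christoffelKPoly φ n v).degree ≤ n := by
  refine (degree_sum_le _ _).trans (Finset.sup_le fun j hj => (degree_smul_le _ _).trans ?_)
  exact (hdeg j).trans (by exact_mod_cast Finset.mem_range_succ_iff.mp hj)

lemma christoffelK_self (v : ℂ) :
    christoffelK φ n v v = ((∑ j ∈ Finset.range (n + 1), ‖(φ j).eval v‖ ^ 2 : ℝ) : ℂ) := by
  simp [christoffelK, Complex.conj_mul']

lemma ofReal_re_christoffelK_self (v : ℂ) :
    ((christoffelK φ n v v).re : ℂ) = christoffelK φ n v v := by
  rw [christoffelK_self, Complex.ofReal_re]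

lemma christoffelK_self_re_pos (h0 : (φ 0).degree = 0) (v : ℂ) :
    0 < (christoffelK φ n v v).re := by
  have hv : (φ 0).eval v ≠ 0 := ((isUnit_iff_degree_eq_zero.mpr h0).map (evalRingHom v)).ne_zero
  rw [christoffelK_self, Complex.ofReal_re]
  exact Finset.sum_pos' (fun j _ => by positivity) ⟨0, by simp, by positivity⟩

lemma inner_christoffelKPoly (hdeg : ∀ k, (φ k).degree = k)
    (hφ : Orthonormal ℂ (fun k => polyToL2 hμT (φ k))) {p : ℂ[X]} (hp : p.degree ≤ n) (v : ℂ) :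
    ⟪polyToL2 hμT (christoffelKPoly φ n v), polyToL2 hμT p⟫_ℂ = p.eval v := by
  let S : Sequence ℂ := ⟨φ, hdeg⟩
  have hspan : p ∈ Submodule.span ℂ (φ '' Set.Iic n) := by
    rw [S.span_degreeLE fun i _ => (leadingCoeff_ne_zero.mpr (S.ne_zero i)).isUnit]
    exact mem_degreeLE.mpr hp
  refine LinearMap.eqOn_span' (f := (innerₛₗ ℂ (polyToL2 hμT (christoffelKPoly φ n v))).comp
    (polyToL2 hμT)) (g := leval v) ?_ hspan
  rintro _ ⟨k, hk, rfl⟩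
  have h := hφ.inner_left_sum (fun j => conj ((φ j).eval v)) (Finset.mem_range_succ_iff.mpr hk)
  change ⟪polyToL2 hμT (christoffelKPoly φ n v), polyToL2 hμT (φ k)⟫_ℂ = (φ k).eval v
  simpa only [christoffelKPoly, map_sum, map_smul, Complex.conj_conj] using h

end Kernel

lemma degree_X_mul_le_of_degree_lt {R : Type*} [Semiring R] {s : R[X]} {n : ℕ}
    (hs : s.degree < n) : (X * s).degree ≤ (n : WithBot ℕ) := by
  nontriviality R
  rw [(commute_X s).eq, degree_mul_X]
  exact Nat.WithBot.add_one_le_of_lt hs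

lemma exists_eq_X_sub_C_mul_of_eval_eq_zero {R : Type*} [CommRing R] {r : R[X]} {v : R} {n : ℕ}
    (hr : r.degree ≤ n) (hrv : r.eval v = 0) : ∃ s : R[X], s.degree < n ∧ r = (X - C v) * s := by
  refine ⟨r /ₘ (X - C v), ?_, (mul_divByMonic_eq_iff_isRoot.mpr hrv).symm⟩
  rcases eq_or_ne r 0 with rfl | hr0
  · simp
  · nontriviality R
    exact (degree_divByMonic_lt r (X - C v) hr0 (by simp)).trans_le hr

section ParaOrthogonal

variable {μ : Measure ℂ} [IsFiniteMeasure μ] (hμT : μ (Metric.sphere (0 : ℂ) 1)ᶜ = 0)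
  {φ : ℕ → ℂ[X]} {n : ℕ}

lemma inner_X_mul_X_sub_C_mul {v : ℂ} (hv : ‖v‖ = 1) (s q : ℂ[X]) :
    ⟪polyToL2 hμT (X * s), polyToL2 hμT ((X - C v) * q)⟫_ℂ
      = -v * ⟪polyToL2 hμT ((X - C v) * s), polyToL2 hμT q⟫_ℂ := by
  have hvv : v * conj v = 1 := by simp [Complex.mul_conj', hv]
  simp only [sub_mul, C_mul', map_sub, map_smul, inner_sub_left, inner_sub_right,
    inner_smul_left, inner_smul_right, inner_polyToL2_X_mul]
  linear_combination -⟪polyToL2 hμT s, polyToL2 hμT q⟫_ℂ * hvv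

variable (φ n) in
noncomputable def paraOrthoPoly (w : ℂ) : ℂ[X] :=
  (1 - C (conj w) * X) * christoffelKPoly φ n w

lemma eval_paraOrthoPoly (w z : ℂ) : (paraOrthoPoly φ n w).eval z = paraOrtho φ n w z := by
  simp [paraOrthoPoly, paraOrtho, eval_christoffelKPoly]

lemma natDegree_paraOrthoPoly_le (hdeg : ∀ k, (φ k).degree ≤ k) (w : ℂ) :
    (paraOrthoPoly φ n w).natDegree ≤ n + 1 := by
  refine natDegree_mul_le.trans ?_
  have h1 : (1 - C (conj w) * X).natDegree ≤ 1 := by compute_degree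
  have h2 := natDegree_le_of_degree_le (degree_christoffelKPoly_le (n := n) hdeg w)
  omega

lemma paraOrthoPoly_ne_zero (h0 : (φ 0).degree = 0) (w : ℂ) :
    paraOrthoPoly φ n w ≠ 0 := by
  refine mul_ne_zero (fun h => by simpa using congrArg (coeff · 0) h) fun h => ?_
  have := congrArg (eval w) h
  rw [eval_christoffelKPoly, eval_zero] at this
  exact (christoffelK_self_re_pos (n := n) h0 w).ne' (by simp [this])

lemma inner_X_mul_paraOrthoPoly (hdeg : ∀ k, (φ k).degree = k)
    (hφ : Orthonormal ℂ (fun k => polyToL2 hμT (φ k))) (w : ℂ) {s : ℂ[X]} (hs : s.degree < n) :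
    ⟪polyToL2 hμT (X * s), polyToL2 hμT (paraOrthoPoly φ n w)⟫_ℂ = 0 := by
  rw [paraOrthoPoly, sub_mul, one_mul, mul_assoc, C_mul', map_sub, map_smul, inner_sub_right,
    inner_smul_right, inner_polyToL2_X_mul, ← inner_conj_symm,
    ← inner_conj_symm (𝕜 := ℂ) (polyToL2 hμT s),
    inner_christoffelKPoly hμT hdeg hφ (degree_X_mul_le_of_degree_lt hs),
    inner_christoffelKPoly hμT hdeg hφ hs.le]
  simp

end ParaOrthogonal

section Nodes

variable {μ : Measure ℂ} [IsFiniteMeasure μ] (hμT : μ (Metric.sphere (0 : ℂ) 1)ᶜ = 0)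
  {φ : ℕ → ℂ[X]} {n : ℕ}

lemma inner_divByMonic_X_sub_C_eq_zero {v : ℂ} (hv : ‖v‖ = 1) {B : ℂ[X]}
    (hB : ∀ s : ℂ[X], s.degree < n → ⟪polyToL2 hμT (X * s), polyToL2 hμT B⟫_ℂ = 0)
    (hBv : B.eval v = 0) {r : ℂ[X]} (hr : r.degree ≤ n) (hrv : r.eval v = 0) :
    ⟪polyToL2 hμT r, polyToL2 hμT (B /ₘ (X - C v))⟫_ℂ = 0 := by
  obtain ⟨s, hs, rfl⟩ := exists_eq_X_sub_C_mul_of_eval_eq_zero hr hrv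
  have h := inner_X_mul_X_sub_C_mul hμT hv s (B /ₘ (X - C v))
  rw [mul_divByMonic_eq_iff_isRoot.mpr hBv, hB s hs, zero_eq_mul] at h
  exact h.resolve_left (neg_ne_zero.mpr (by rintro rfl; simp at hv))

lemma christoffelK_self_smul_eq_of_orthogonal (hμinf : ∀ s : Finset ℂ, μ ((s : Set ℂ)ᶜ) ≠ 0)
    (hdeg : ∀ k, (φ k).degree = k) (hφ : Orthonormal ℂ (fun k => polyToL2 hμT (φ k)))
    {v : ℂ} {q : ℂ[X]} (hq : q.degree ≤ n)
    (hqorth : ∀ r : ℂ[X], r.degree ≤ n → r.eval v = 0 → ⟪polyToL2 hμT r, polyToL2 hμT q⟫_ℂ = 0) :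
    christoffelK φ n v v • q = q.eval v • christoffelKPoly φ n v := by
  set r := christoffelK φ n v v • q - q.eval v • christoffelKPoly φ n v with hr_def
  have hr : r.degree ≤ n := by
    rw [← mem_degreeLE] at hq ⊢
    exact sub_mem (Submodule.smul_mem _ _ hq) (Submodule.smul_mem _ _ (mem_degreeLE.mpr
      (degree_christoffelKPoly_le (fun k => (hdeg k).le) v)))
  have hrv : r.eval v = 0 := by simp [r, eval_christoffelKPoly, mul_comm]
  have hTr : polyToL2 hμT r = christoffelK φ n v v • polyToL2 hμT q
      - q.eval v • polyToL2 hμT (christoffelKPoly φ n v) := by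
    simp only [r, map_sub, map_smul]
  have hrr : ⟪polyToL2 hμT r, polyToL2 hμT r⟫_ℂ = 0 := by
    calc ⟪polyToL2 hμT r, polyToL2 hμT r⟫_ℂ
        = ⟪polyToL2 hμT r, christoffelK φ n v v • polyToL2 hμT q
            - q.eval v • polyToL2 hμT (christoffelKPoly φ n v)⟫_ℂ := by rw [← hTr]
      _ = christoffelK φ n v v * ⟪polyToL2 hμT r, polyToL2 hμT q⟫_ℂ
            - q.eval v * conj ⟪polyToL2 hμT (christoffelKPoly φ n v), polyToL2 hμT r⟫_ℂ := by
          rw [inner_sub_right, inner_smul_right, inner_smul_right, inner_conj_symm]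
      _ = 0 := by
          rw [hqorth r hr hrv, inner_christoffelKPoly hμT hdeg hφ hr, hrv]
          simp
  exact sub_eq_zero.mp <|
    polyToL2_injective hμT hμinf (by rwa [map_zero, ← inner_self_eq_zero (𝕜 := ℂ)])

theorem christoffelK_eq_zero_of_paraOrtho_eq_zero (hμinf : ∀ s : Finset ℂ, μ ((s : Set ℂ)ᶜ) ≠ 0)
    (hdeg : ∀ k, (φ k).degree = k) (hφ : Orthonormal ℂ (fun k => polyToL2 hμT (φ k)))
    {w u v : ℂ} (hv : ‖v‖ = 1) (huv : u ≠ v) (hBu : paraOrtho φ n w u = 0)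
    (hBv : paraOrtho φ n w v = 0) :
    christoffelK φ n v u = 0 := by
  set q := paraOrthoPoly φ n w /ₘ (X - C v)
  have hBq : (X - C v) * q = paraOrthoPoly φ n w :=
    mul_divByMonic_eq_iff_isRoot.mpr (by rwa [IsRoot, eval_paraOrthoPoly])
  have hq : q.degree ≤ n := by
    refine degree_le_of_natDegree_le ?_
    have := natDegree_paraOrthoPoly_le (n := n) (fun k => (hdeg k).le) w
    rw [natDegree_divByMonic _ (monic_X_sub_C v), natDegree_X_sub_C]
    omega
  have hK := christoffelK_self_smul_eq_of_orthogonal hμT hμinf hdeg hφ hq fun r hr hrv =>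
    inner_divByMonic_X_sub_C_eq_zero hμT hv (fun s hs => inner_X_mul_paraOrthoPoly hμT hdeg hφ w hs)
      (by rwa [eval_paraOrthoPoly]) hr hrv
  have hqu : q.eval u = 0 := by
    have := congrArg (eval u) hBq
    rw [eval_mul, eval_paraOrthoPoly, hBu] at this
    simpa [sub_ne_zero.mpr huv] using this
  have hqv : q.eval v ≠ 0 := by
    intro h
    rw [h, zero_smul, smul_eq_zero] at hK
    rcases hK with hK | hK
    · exact (christoffelK_self_re_pos (n := n) (hdeg 0) v).ne' (by rw [hK, Complex.zero_re])
    · exact paraOrthoPoly_ne_zero (hdeg 0) w (by rw [← hBq, hK, mul_zero])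
  have := congrArg (eval u) hK
  simp only [eval_smul, hqu, eval_christoffelKPoly, smul_eq_mul, mul_zero] at this
  exact (mul_eq_zero.mp this.symm).resolve_left hqv

end Nodes

section Lagrange

variable {μ : Measure ℂ} [IsFiniteMeasure μ] (hμT : μ (Metric.sphere (0 : ℂ) 1)ᶜ = 0)
  {φ : ℕ → ℂ[X]} {n : ℕ} {ι : Type*} [Fintype ι] {ζ : ι → ℂ}

variable (φ n) in
noncomputable def lagrangePoly (ζ : ι → ℂ) (f : ℂ → ℂ) : ℂ[X] :=
  ∑ j, (f (ζ j) / christoffelK φ n (ζ j) (ζ j)) • christoffelKPoly φ n (ζ j)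

lemma eval_lagrangePoly (ζ : Fin (n + 1) → ℂ) (f : ℂ → ℂ) (z : ℂ) :
    (lagrangePoly φ n ζ f).eval z = lagrangeInterp φ n ζ f z := by
  simp [lagrangePoly, lagrangeInterp, ellFun, eval_finsetSum, eval_christoffelKPoly,
    div_mul_eq_mul_div, mul_div_assoc]

lemma eval_lagrangePoly_node (h0 : (φ 0).degree = 0)
    (hζ : Pairwise fun j k => christoffelK φ n (ζ j) (ζ k) = 0) (f : ℂ → ℂ) (k : ι) :
    (lagrangePoly φ n ζ f).eval (ζ k) = f (ζ k) := by
  classical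
  have hk : christoffelK φ n (ζ k) (ζ k) ≠ 0 := fun h => by
    simpa [h] using christoffelK_self_re_pos (n := n) h0 (ζ k)
  rw [lagrangePoly, eval_finsetSum, Finset.sum_eq_single k (fun j _ hjk => by
    rw [eval_smul, eval_christoffelKPoly, hζ hjk, smul_zero]) (by simp)]
  rw [eval_smul, eval_christoffelKPoly, smul_eq_mul, div_mul_cancel₀ _ hk]

lemma lagrangePoly_one (hdeg : ∀ k, (φ k).degree = k) (hcard : Fintype.card ι = n + 1)
    (hinj : Function.Injective ζ) (hζ : Pairwise fun j k => christoffelK φ n (ζ j) (ζ k) = 0) :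
    lagrangePoly φ n ζ (fun _ => 1) = 1 := by
  have hL : lagrangePoly φ n ζ (fun _ => 1) ∈ degreeLE ℂ n :=
    Submodule.sum_mem _ fun j _ => Submodule.smul_mem _ _
      (mem_degreeLE.mpr (degree_christoffelKPoly_le (fun k => (hdeg k).le) _))
  have hlt : ∀ p : ℂ[X], p.degree ≤ n → p.degree < (Finset.univ : Finset ι).card := fun p hp => by
    rw [Finset.card_univ, hcard]
    exact hp.trans_lt (by exact_mod_cast n.lt_succ_self)
  refine eq_of_degrees_lt_of_eval_index_eq _ hinj.injOn (hlt _ (mem_degreeLE.mp hL))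
    (hlt _ (degree_one_le.trans (by exact_mod_cast n.zero_le))) fun k _ => ?_
  rw [eval_lagrangePoly_node (hdeg 0) hζ, eval_one]

lemma norm_polyToL2_lagrangePoly_sq (hdeg : ∀ k, (φ k).degree = k)
    (hφ : Orthonormal ℂ (fun k => polyToL2 hμT (φ k)))
    (hζ : Pairwise fun j k => christoffelK φ n (ζ j) (ζ k) = 0) (f : ℂ → ℂ) :
    ‖polyToL2 hμT (lagrangePoly φ n ζ f)‖ ^ 2
      = ∑ j, ‖f (ζ j)‖ ^ 2 / (christoffelK φ n (ζ j) (ζ j)).re := by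
  classical
  have hgram : ∀ j k, ⟪polyToL2 hμT (christoffelKPoly φ n (ζ j)),
      polyToL2 hμT (christoffelKPoly φ n (ζ k))⟫_ℂ
        = if k = j then ((christoffelK φ n (ζ j) (ζ j)).re : ℂ) else 0 := by
    intro j k
    rw [inner_christoffelKPoly hμT hdeg hφ (degree_christoffelKPoly_le (fun k => (hdeg k).le) _),
      eval_christoffelKPoly]
    split_ifs with h
    · rw [h, ofReal_re_christoffelK_self]
    · exact hζ h
  rw [← inner_self_eq_norm_sq (𝕜 := ℂ), lagrangePoly, map_sum]
  simp only [map_smul, sum_inner, inner_sum, inner_smul_left, inner_smul_right, hgram, mul_ite,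
    mul_zero, Finset.sum_ite_eq, Finset.mem_univ, if_true, RCLike.re_to_complex, Complex.re_sum]
  refine Finset.sum_congr rfl fun j _ => ?_
  have hd := (christoffelK_self_re_pos (n := n) (hdeg 0) (ζ j)).ne'
  set d := (christoffelK φ n (ζ j) (ζ j)).re
  have hK : christoffelK φ n (ζ j) (ζ j) = d := (ofReal_re_christoffelK_self _).symm
  rw [hK, map_div₀, Complex.conj_ofReal, ← Complex.ofReal_re (‖f (ζ j)‖ ^ 2 / d)]
  congr 1
  push_cast
  rw [← Complex.mul_conj']
  field_simp

end Lagrange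

theorem sq_norm_lagrangeInterp_general
    (μ : Measure ℂ) [IsFiniteMeasure μ]
    (hμT : μ (Metric.sphere (0 : ℂ) 1)ᶜ = 0)
    (hμinf : ∀ s : Finset ℂ, μ ((s : Set ℂ)ᶜ) ≠ 0)
    (φ : ℕ → Polynomial ℂ)
    (hdeg : ∀ k, (φ k).degree = (k : ℕ))
    (horth : ∀ k m, ∫ z, (φ k).eval z * conj ((φ m).eval z) ∂μ
        = if k = m then 1 else 0)
    (n : ℕ) (w : ℂ)
    (ζ : Fin (n + 1) → ℂ)
    (hζT : ∀ j, ζ j ∈ Metric.sphere (0 : ℂ) 1)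
    (hζinj : Function.Injective ζ)
    (hζ0 : ∀ j, paraOrtho φ n w (ζ j) = 0)
    (f : ℂ → ℂ) :
    (∫ z, ‖lagrangeInterp φ n ζ f z‖ ^ 2 ∂μ
      = ∑ j : Fin (n + 1), ‖f (ζ j)‖ ^ 2 / (christoffelK φ n (ζ j) (ζ j)).re) ∧
    (∫ z, ‖lagrangeInterp φ n ζ f z‖ ^ 2 ∂μ
      ≤ (μ Set.univ).toReal *
        Finset.univ.sup' Finset.univ_nonempty (fun j => ‖f (ζ j)‖ ^ 2)) := by
  have hφ := orthonormal_polyToL2 hμT horth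
  have hnodes : Pairwise fun j k => christoffelK φ n (ζ j) (ζ k) = 0 := fun j k hjk =>
    christoffelK_eq_zero_of_paraOrtho_eq_zero hμT hμinf hdeg hφ (by simpa using hζT j)
      (hζinj.ne hjk).symm (hζ0 k) (hζ0 j)
  have hnorm (g : ℂ → ℂ) : ∫ z, ‖lagrangeInterp φ n ζ g z‖ ^ 2 ∂μ
      = ∑ j, ‖g (ζ j)‖ ^ 2 / (christoffelK φ n (ζ j) (ζ j)).re := by
    simp_rw [← eval_lagrangePoly, ← norm_polyToL2_sq hμT,
      norm_polyToL2_lagrangePoly_sq hμT hdeg hφ hnodes]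
  have hmass : ∑ j, 1 / (christoffelK φ n (ζ j) (ζ j)).re = (μ Set.univ).toReal := by
    have h := hnorm fun _ => 1
    simp_rw [← eval_lagrangePoly, lagrangePoly_one hdeg (Fintype.card_fin _) hζinj hnodes] at h
    simpa [measureReal_def] using h.symm
  refine ⟨hnorm f, ?_⟩
  rw [hnorm, ← hmass, Finset.sum_mul]
  refine Finset.sum_le_sum fun j _ => ?_
  rw [one_div_mul_eq_div]
  exact div_le_div_of_nonneg_right (Finset.le_sup' (fun j => ‖f (ζ j)‖ ^ 2) (Finset.mem_univ j))
    (christoffelK_self_re_pos (hdeg 0) _).le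

/-- For any `f : T → ℂ`, `∫_T |L_n(f)|² dμ = ∑_{j=0}^n |f(ζ_{jn})|² / K_n(ζ_{jn},ζ_{jn})`;
in particular `∫_T |L_n(f)|² dμ ≤ μ(T) · max_{0≤j≤n} |f(ζ_{jn})|²`. -/
theorem sq_norm_lagrangeInterp
    (μ : Measure ℂ) [IsFiniteMeasure μ]
    (hμT : μ (Metric.sphere (0 : ℂ) 1)ᶜ = 0)
    (hμinf : ∀ s : Finset ℂ, μ ((s : Set ℂ)ᶜ) ≠ 0)
    (φ : ℕ → Polynomial ℂ)
    (hdeg : ∀ k, (φ k).degree = (k : ℕ))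
    (hlead : ∀ k, 0 < ((φ k).leadingCoeff).re ∧ ((φ k).leadingCoeff).im = 0)
    (horth : ∀ k m, ∫ z, (φ k).eval z * conj ((φ m).eval z) ∂μ
        = if k = m then 1 else 0)
    (n : ℕ) (w : ℂ) (hw : w ∈ Metric.sphere (0 : ℂ) 1)
    (ζ : Fin (n + 1) → ℂ)
    (hζT : ∀ j, ζ j ∈ Metric.sphere (0 : ℂ) 1)
    (hζinj : Function.Injective ζ)
    (hζ0 : ∀ j, paraOrtho φ n w (ζ j) = 0)
    (f : ℂ → ℂ) :
    (∫ z, ‖lagrangeInterp φ n ζ f z‖ ^ 2 ∂μ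
      = ∑ j : Fin (n + 1), ‖f (ζ j)‖ ^ 2 / (christoffelK φ n (ζ j) (ζ j)).re) ∧
    (∫ z, ‖lagrangeInterp φ n ζ f z‖ ^ 2 ∂μ
      ≤ (μ Set.univ).toReal *
        Finset.univ.sup' Finset.univ_nonempty (fun j => ‖f (ζ j)‖ ^ 2)) :=
  sq_norm_lagrangeInterp_general μ hμT hμinf φ hdeg horth n w ζ hζT hζinj hζ0 f
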